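/- arXiv:math/0009235 — 4 statements merged into one kernel-verified Lean document; each statement's English description precedes it below -/
import Mathlib

section
/- Let D ⊆ ℝⁿ be open, φ : D → ℝ a C³ function with invertible Hessian Φ = Hess φ, and set Γ^j_{kl}(x) = Σ_m φ^{jm}(x) ∂³φ/∂x^m∂x^k∂x^l (x). Then a C² curve γ : I → D (I an open interval) satisfies the geodesic equation of the A-connection, γ̈^j(t) + Σ_{k,l} Γ^j_{kl}(γ(t)) γ̇^k(t) γ̇^l(t) = 0 for all t ∈ I and all j, if and only if the curve ∇φ ∘ γ : I → ℝⁿ has vanishing second derivative, i.e., the Legendre transformation (gradient map) ∇φ carries geodesics of the A-connection to straight lines, which are the geodesics of the flat B-connection on the dual side. -/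
/-! The velocity of `∇φ ∘ γ` is `Hess φ (γ) γ̇`; by the product and chain rules its derivative is
`(D Hess φ)(γ̇) γ̇ + Hess φ (γ) γ̈`. Applying the inverse Hessian to this vector gives exactly the
A-geodesic expression `γ̈ʲ + Γʲₖₗ γ̇ᵏ γ̇ˡ`, so one vanishes iff the other does. -/

open Matrix Set

attribute [local instance] Matrix.normedAddCommGroup Matrix.normedSpace

/-- The continuous linear map `u ↦ A *ᵥ u` associated to a matrix `A`. -/
noncomputable def matCLM {n : ℕ} (A : Matrix (Fin n) (Fin n) ℝ) :
    (Fin n → ℝ) →L[ℝ] (Fin n → ℝ) :=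
  LinearMap.toContinuousLinearMap A.mulVecLin

/-- The continuous linear functional `u ↦ ∑ j, v j * u j` associated to a vector `v`;
a function has gradient `v` at `x` iff its Fréchet derivative there is `gradCLM v`. -/
noncomputable def gradCLM {n : ℕ} (v : Fin n → ℝ) : (Fin n → ℝ) →L[ℝ] ℝ :=
  ∑ j, v j • ContinuousLinearMap.proj j

theorem HasDerivAt.matrix_mulVec {𝕜 : Type*} [NontriviallyNormedField 𝕜] {m n : Type*}
    [Fintype m] [Fintype n] {A : 𝕜 → Matrix m n 𝕜} {A' : Matrix m n 𝕜} {v : 𝕜 → n → 𝕜}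
    {v' : n → 𝕜} {t : 𝕜} (hA : HasDerivAt A A' t) (hv : HasDerivAt v v' t) :
    HasDerivAt (fun s => A s *ᵥ v s) (A' *ᵥ v t + A t *ᵥ v') t := by
  refine hasDerivAt_pi.mpr fun i => ?_
  have hAi : ∀ k, HasDerivAt (fun s => A s i k) (A' i k) t :=
    hasDerivAt_pi.mp (hasDerivAt_pi.mp hA i)
  have hvk : ∀ k, HasDerivAt (fun s => v s k) (v' k) t := hasDerivAt_pi.mp hv
  simpa only [mulVec, dotProduct, Pi.add_apply, ← Finset.sum_add_distrib] using
    HasDerivAt.fun_sum (u := Finset.univ) fun k _ => (hAi k).fun_mul (hvk k)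

theorem Matrix.sum_sum_mul_apply_single_mul_mul {R ι κ μ : Type*} [CommSemiring R]
    [Fintype ι] [DecidableEq ι] [Fintype μ] (B : Matrix κ μ R)
    (L : (ι → R) →ₗ[R] Matrix μ ι R) (v : ι → R) (j : κ) :
    ∑ k, ∑ l, (∑ m, B j m * L (Pi.single l 1) m k) * v k * v l = (B *ᵥ (L v *ᵥ v)) j := by
  have hLv : L v = ∑ l, v l • L (Pi.single l 1) := by
    conv_lhs => rw [← (Pi.basisFun R ι).sum_repr v]
    simp only [Pi.basisFun_repr, Pi.basisFun_apply, map_sum, map_smul]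
  simp only [hLv, mulVec, dotProduct, Matrix.sum_apply, Matrix.smul_apply, smul_eq_mul,
    Finset.mul_sum, Finset.sum_mul]
  conv_rhs => rw [Finset.sum_comm]
  exact Finset.sum_congr rfl fun k _ => Finset.sum_comm.trans <|
    Finset.sum_congr rfl fun m _ => Finset.sum_congr rfl fun l _ => by ring

theorem legendre_maps_A_geodesics_to_lines_general {n : ℕ}
    (D : Set (Fin n → ℝ))
    (Hφ : (Fin n → ℝ) → Matrix (Fin n) (Fin n) ℝ)
    (hinv : ∀ x ∈ D, IsUnit (Hφ x).det)
    (DH : (Fin n → ℝ) → (Fin n → ℝ) →L[ℝ] Matrix (Fin n) (Fin n) ℝ)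
    (hDH : ∀ x ∈ D, HasFDerivAt Hφ (DH x) x)
    (a b : ℝ)
    (γ γ' γ'' : ℝ → (Fin n → ℝ))
    (hγD : ∀ t ∈ Set.Ioo a b, γ t ∈ D)
    (hγ' : ∀ t ∈ Set.Ioo a b, HasDerivAt γ (γ' t) t)
    (hγ'' : ∀ t ∈ Set.Ioo a b, HasDerivAt γ' (γ'' t) t) :
    (∀ t ∈ Set.Ioo a b, ∀ j : Fin n,
        γ'' t j + ∑ k, ∑ l,
          (∑ m, (Hφ (γ t))⁻¹ j m * DH (γ t) (Pi.single l 1) m k) * γ' t k * γ' t l = 0)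
      ↔ (∀ t ∈ Set.Ioo a b,
          HasDerivAt (fun s => (Hφ (γ s)).mulVec (γ' s)) 0 t) := by
  refine forall₂_congr fun t ht => ?_
  set H := Hφ (γ t)
  set w := DH (γ t) (γ' t) *ᵥ γ' t + H *ᵥ γ'' t
  have hdet : IsUnit H.det := hinv _ (hγD t ht)
  have hvel : HasDerivAt (fun s => Hφ (γ s) *ᵥ γ' s) w t :=
    ((hDH _ (hγD t ht)).comp_hasDerivAt t (hγ' t ht)).matrix_mulVec (hγ'' t ht)
  have hgeod : ∀ j, γ'' t j + ∑ k, ∑ l,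
      (∑ m, H⁻¹ j m * DH (γ t) (Pi.single l 1) m k) * γ' t k * γ' t l = (H⁻¹ *ᵥ w) j := by
    intro j
    rw [mulVec_add, mulVec_mulVec (γ'' t), nonsing_inv_mul _ hdet, one_mulVec, Pi.add_apply,
      add_comm]
    exact congrArg (· + γ'' t j)
      (sum_sum_mul_apply_single_mul_mul H⁻¹ (DH (γ t)).toLinearMap _ j)
  simp only [hgeod]
  calc (∀ j, (H⁻¹ *ᵥ w) j = 0) ↔ H⁻¹ *ᵥ w = 0 := funext_iff.symm
    _ ↔ w = 0 :=
      (mulVec_injective_iff_isUnit.mpr (isUnit_nonsing_inv_iff.mpr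
        ((isUnit_iff_isUnit_det H).mpr hdet))).eq_iff' (mulVec_zero _)
    _ ↔ HasDerivAt (fun s => Hφ (γ s) *ᵥ γ' s) 0 t := ⟨fun h => h ▸ hvel, hvel.unique⟩

/-- Let `D ⊆ ℝⁿ` be open, `φ : D → ℝ` a C³ function with gradient map
`Gφ`, invertible Hessian `Hφ`, and third derivatives recorded by `DH` (the Fréchet
derivative of `Hφ`; thus `φ_{mkl} = DH x (Pi.single l 1) m k`).  The A-connection has
Christoffel symbols `Γ^j_{kl} = Σ_m φ^{jm} φ_{mkl}`.  Then a C² curve `γ` in `D` defined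
on the open interval `(a, b)` (with velocity `γ'` and acceleration `γ''`) satisfies the
geodesic equation `γ̈^j + Σ_{k,l} Γ^j_{kl}(γ) γ̇^k γ̇^l = 0` of the A-connection iff the
curve `∇φ ∘ γ` has vanishing second derivative, i.e. iff its first derivative
`t ↦ Hess φ (γ t) *ᵥ γ̇(t)` (which is `(∇φ ∘ γ)'` by the chain rule) has derivative `0`
everywhere: the Legendre transformation carries A-geodesics to straight lines, the
geodesics of the flat B-connection on the dual side. -/
theorem legendre_maps_A_geodesics_to_lines {n : ℕ}
    (D : Set (Fin n → ℝ)) (hD : IsOpen D)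
    (φ : (Fin n → ℝ) → ℝ)
    (Gφ : (Fin n → ℝ) → (Fin n → ℝ))
    (Hφ : (Fin n → ℝ) → Matrix (Fin n) (Fin n) ℝ)
    (hgradφ : ∀ x ∈ D, HasFDerivAt φ (gradCLM (Gφ x)) x)
    (hhessφ : ∀ x ∈ D, HasFDerivAt Gφ (matCLM (Hφ x)) x)
    (hinv : ∀ x ∈ D, IsUnit (Hφ x).det)
    (DH : (Fin n → ℝ) → (Fin n → ℝ) →L[ℝ] Matrix (Fin n) (Fin n) ℝ)
    (hDH : ∀ x ∈ D, HasFDerivAt Hφ (DH x) x)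
    (a b : ℝ)
    (γ γ' γ'' : ℝ → (Fin n → ℝ))
    (hγD : ∀ t ∈ Set.Ioo a b, γ t ∈ D)
    (hγ' : ∀ t ∈ Set.Ioo a b, HasDerivAt γ (γ' t) t)
    (hγ'' : ∀ t ∈ Set.Ioo a b, HasDerivAt γ' (γ'' t) t) :
    (∀ t ∈ Set.Ioo a b, ∀ j : Fin n,
        γ'' t j + ∑ k, ∑ l,
          (∑ m, (Hφ (γ t))⁻¹ j m * DH (γ t) (Pi.single l 1) m k) * γ' t k * γ' t l = 0)
      ↔ (∀ t ∈ Set.Ioo a b,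
          HasDerivAt (fun s => (Hφ (γ s)).mulVec (γ' s)) 0 t) :=
  legendre_maps_A_geodesics_to_lines_general D Hφ hinv DH hDH a b γ γ' γ'' hγD hγ' hγ''
end

section
/- Let D ⊆ ℝⁿ be open, φ : D → ℝ a C³ function whose Hessian matrix Φ(x) = (φ_{jk}(x)) is invertible for all x, with inverse (φ^{jk}(x)), and let α : D → Matₙ(ℂ) be a C¹ matrix-valued function with entries α_{jk}. Then for all j, l, q ∈ {1,…,n} and all x ∈ D: Σ_p φ^{pq} ∂/∂x^p ( Σ_k α_{jk} φ^{kl} ) − Σ_p φ^{pl} ∂/∂x^p ( Σ_k α_{jk} φ^{kq} ) = Σ_{k,p} ( ∂α_{jk}/∂x^p − ∂α_{jp}/∂x^k ) φ^{kl} φ^{pq}. (This identity, which uses the total symmetry of the third derivatives of φ, shows that the fiberwise Fourier–Legendre mirror transformation of differential forms commutes with the ∂̄-operator.) -/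
open Matrix Set

attribute [local instance] Matrix.normedAddCommGroup Matrix.normedSpace

/-! Write `A = Φ⁻¹` and `∂_p` for the derivative along `eₚ`. Differentiating `α = (α A) Φ`
gives `∂_p (α A) = (∂_p α) A - α A (∂_p Φ) A`. Contracted with `A` and antisymmetrised in
`(l, q)`, the first term is the right-hand side. The second term contributes
`∑ (α A)_{jm} A_{pq} ∂_p φ_{mc} A_{cl}`, which is symmetric in `(l, q)` because
`∂_p φ_{mc} = ∂_c φ_{mp}` (symmetry of the second derivative of `∇φ`), so it cancels. -/

open Finset

section Algebra

variable {ι R : Type*} [Fintype ι] [CommRing R]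

theorem sum_mul_mul_apply_sub_swap (A : Matrix ι ι R) (V : ι → Matrix ι ι R) (j l q : ι) :
    ∑ p, A p q * (V p * A) j l - ∑ p, A p l * (V p * A) j q
      = ∑ k, ∑ p, (V p j k - V k j p) * A k l * A p q := by
  simp only [Matrix.mul_apply, mul_sum, sub_mul, sum_sub_distrib]
  rw [sum_comm (γ := ι) (f := fun p k => A p q * (V p j k * A k l))]
  congr 1 <;> exact sum_congr rfl fun _ _ => sum_congr rfl fun _ _ => by ring

theorem sum_mul_sandwich_apply_comm (A M : Matrix ι ι R) (T : ι → Matrix ι ι R)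
    (hT : ∀ p m c, T p m c = T c m p) (j l q : ι) :
    ∑ p, A p q * (M * A * (T p * A)) j l = ∑ p, A p l * (M * A * (T p * A)) j q := by
  have expand : ∀ l q, ∑ p, A p q * (M * A * (T p * A)) j l
      = ∑ m, ∑ p, ∑ c, (M * A) j m * (A p q * T p m c * A c l) := by
    intro l q
    simp only [Matrix.mul_apply (M := M * A), Matrix.mul_apply (M := T _), mul_sum]
    rw [sum_comm]
    exact sum_congr rfl fun _ _ => sum_congr rfl fun _ _ => sum_congr rfl fun _ _ => by ring
  rw [expand, expand]
  refine sum_congr rfl fun m _ => ?_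
  rw [sum_comm]
  exact sum_congr rfl fun p _ => sum_congr rfl fun c _ => by rw [hT]; ring

end Algebra

section Calculus

variable {E ι : Type*} [NormedAddCommGroup E] [NormedSpace ℝ E] [Fintype ι] [DecidableEq ι]

theorem Matrix.map_ofReal_nonsing_inv_mul {M : Matrix ι ι ℝ} (h : IsUnit M.det) :
    M⁻¹.map ((↑) : ℝ → ℂ) * M.map (↑) = 1 := by
  have := congrArg (·.map Complex.ofRealHom) (M.nonsing_inv_mul h)
  simp only [Matrix.map_mul, Matrix.map_one, map_zero, map_one] at this
  exact this

theorem Matrix.map_ofReal_mul_nonsing_inv {M : Matrix ι ι ℝ} (h : IsUnit M.det) :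
    M.map ((↑) : ℝ → ℂ) * M⁻¹.map (↑) = 1 := by
  have := congrArg (·.map Complex.ofRealHom) (M.mul_nonsing_inv h)
  simp only [Matrix.map_mul, Matrix.map_one, map_zero, map_one] at this
  exact this

theorem HasFDerivAt.matrix_mul_apply {f g : E → Matrix ι ι ℂ}
    {f' g' fg' : E →L[ℝ] Matrix ι ι ℂ} {x : E}
    (hf : HasFDerivAt f f' x) (hg : HasFDerivAt g g' x)
    (hfg : HasFDerivAt (fun y => f y * g y) fg' x) (v : E) :
    fg' v = f x * g' v + f' v * g x := by
  -- The norm topology on `Matrix` is not reducibly the default one, so the bilinear map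
  -- must be built against it for `hasFDerivAt_of_bilinear` to apply.
  let _ : TopologicalSpace (Matrix ι ι ℂ) := PseudoMetricSpace.toUniformSpace.toTopologicalSpace
  let _ : Module ℝ (Matrix ι ι ℂ) := NormedSpace.toModule
  let mul : Matrix ι ι ℂ →L[ℝ] Matrix ι ι ℂ →L[ℝ] Matrix ι ι ℂ :=
    LinearMap.toContinuousLinearMap
      ((LinearMap.toContinuousLinearMap : _ ≃ₗ[ℝ] _).toLinearMap ∘ₗ LinearMap.mul ℝ _)
  rw [hfg.unique (mul.hasFDerivAt_of_bilinear hf hg)]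
  rfl

theorem HasFDerivAt.mul_matrix_inv_apply {α : E → Matrix ι ι ℂ} {H : E → Matrix ι ι ℝ}
    {α' P' : E →L[ℝ] Matrix ι ι ℂ} {H' : E →L[ℝ] Matrix ι ι ℝ} {x : E}
    (hP : HasFDerivAt (fun y => α y * (H y)⁻¹.map ((↑) : ℝ → ℂ)) P' x)
    (hinv : ∀ᶠ y in nhds x, IsUnit (H y).det)
    (hα : HasFDerivAt α α' x) (hH : HasFDerivAt H H' x) (v : E) :
    P' v = α' v * (H x)⁻¹.map (↑)
      - α x * (H x)⁻¹.map (↑) * ((H' v).map (↑) * (H x)⁻¹.map (↑)) := by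
  have hK := (LinearMap.toContinuousLinearMap
    (Complex.ofRealCLM.toLinearMap.mapMatrix : Matrix ι ι ℝ →ₗ[ℝ] Matrix ι ι ℂ)).hasFDerivAt.comp
      x hH
  have hα_eq : α =ᶠ[nhds x] fun y => (α y * (H y)⁻¹.map (↑)) * (H y).map (↑) := by
    filter_upwards [hinv] with y hy
    rw [mul_assoc, Matrix.map_ofReal_nonsing_inv_mul hy, mul_one]
  have hprod : α' v = α x * (H x)⁻¹.map (↑) * (H' v).map (↑) + P' v * (H x).map (↑) :=
    hP.matrix_mul_apply hK (hα.congr_of_eventuallyEq hα_eq.symm) v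
  calc P' v = P' v * (H x).map (↑) * (H x)⁻¹.map (↑) := by
        rw [mul_assoc, Matrix.map_ofReal_mul_nonsing_inv hinv.self_of_nhds, mul_one]
    _ = _ := by rw [eq_sub_of_add_eq' hprod.symm]; noncomm_ring

end Calculus

theorem jacobian_fderiv_symm {n : ℕ} {G : (Fin n → ℝ) → (Fin n → ℝ)}
    {H : (Fin n → ℝ) → Matrix (Fin n) (Fin n) ℝ}
    {H' : (Fin n → ℝ) →L[ℝ] Matrix (Fin n) (Fin n) ℝ} {x : Fin n → ℝ}
    (hG : ∀ᶠ y in nhds x, HasFDerivAt G (matCLM (H y)) y) (hH : HasFDerivAt H H' x)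
    (p b c : Fin n) : H' (Pi.single p 1) b c = H' (Pi.single c 1) b p := by
  let _ : TopologicalSpace (Matrix (Fin n) (Fin n) ℝ) :=
    PseudoMetricSpace.toUniformSpace.toTopologicalSpace
  let _ : Module ℝ (Matrix (Fin n) (Fin n) ℝ) := NormedSpace.toModule
  have hM := (LinearMap.toContinuousLinearMap
    ((LinearMap.toContinuousLinearMap : _ ≃ₗ[ℝ] _).toLinearMap ∘ₗ Matrix.toLin'.toLinearMap)
      ).hasFDerivAt.comp x hH
  have : (H' (Pi.single p 1) *ᵥ Pi.single c 1) b = (H' (Pi.single c 1) *ᵥ Pi.single p 1) b :=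
    congrFun (second_derivative_symmetric_of_eventually_of_real hG hM _ _) b
  simpa [Matrix.mulVec_single] using this

theorem mirror_transform_commutes_with_dbar_identity_general {n : ℕ}
    (D : Set (Fin n → ℝ)) (hD : IsOpen D)
    (Gφ : (Fin n → ℝ) → (Fin n → ℝ))
    (Hφ : (Fin n → ℝ) → Matrix (Fin n) (Fin n) ℝ)
    (hhessφ : ∀ x ∈ D, HasFDerivAt Gφ (matCLM (Hφ x)) x)
    (hinv : ∀ x ∈ D, IsUnit (Hφ x).det)
    (DH : (Fin n → ℝ) → (Fin n → ℝ) →L[ℝ] Matrix (Fin n) (Fin n) ℝ)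
    (hDH : ∀ x ∈ D, HasFDerivAt Hφ (DH x) x)
    (α : (Fin n → ℝ) → Matrix (Fin n) (Fin n) ℂ)
    (Dα : (Fin n → ℝ) → (Fin n → ℝ) →L[ℝ] Matrix (Fin n) (Fin n) ℂ)
    (hα : ∀ x ∈ D, HasFDerivAt α (Dα x) x)
    (DP : (Fin n → ℝ) → (Fin n → ℝ) →L[ℝ] Matrix (Fin n) (Fin n) ℂ)
    (hDP : ∀ x ∈ D,
      HasFDerivAt (fun y => α y * ((Hφ y)⁻¹).map (fun r => (r : ℂ))) (DP x) x) :
    ∀ x ∈ D, ∀ j l q : Fin n,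
      (∑ p, ((((Hφ x)⁻¹ p q : ℝ)) : ℂ) * DP x (Pi.single p 1) j l)
        - (∑ p, ((((Hφ x)⁻¹ p l : ℝ)) : ℂ) * DP x (Pi.single p 1) j q)
      = ∑ k, ∑ p,
          (Dα x (Pi.single p 1) j k - Dα x (Pi.single k 1) j p)
            * ((((Hφ x)⁻¹ k l : ℝ)) : ℂ) * ((((Hφ x)⁻¹ p q : ℝ)) : ℂ) := by
  intro x hx j l q
  have hD_nhds : ∀ᶠ y in nhds x, y ∈ D := hD.mem_nhds hx
  set A := (Hφ x)⁻¹.map ((↑) : ℝ → ℂ)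
  have hDP_eq := (hDP x hx).mul_matrix_inv_apply (hD_nhds.mono hinv) (hα x hx) (hDH x hx)
  have hsym := jacobian_fderiv_symm (hD_nhds.mono hhessφ) (hDH x hx)
  have hcurl := sum_mul_mul_apply_sub_swap A (fun p => Dα x (Pi.single p 1)) j l q
  have hcancel := sum_mul_sandwich_apply_comm A (α x) (fun p => (DH x (Pi.single p 1)).map (↑))
    (fun p m c => congrArg Complex.ofReal (hsym p m c)) j l q
  simp only [hDP_eq, Matrix.sub_apply, mul_sub, sum_sub_distrib]
  simp only [A, Matrix.map_apply] at hcurl hcancel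
  linear_combination hcurl - hcancel

/-- Let `D ⊆ ℝⁿ` be open and `φ : D → ℝ` a C³ function (gradient `Gφ`,
invertible Hessian `Hφ = (φ_{jk})` with inverse `(φ^{jk}) = (Hφ x)⁻¹`, third derivatives
recorded by `DH`, the Fréchet derivative of `Hφ`), and let `α : D → Matₙ(ℂ)` be a C¹
matrix-valued function with Fréchet derivative `Dα` (so `∂α_{jk}/∂x^p = Dα x (single p 1) j k`).
Let `DP` be the Fréchet derivative of the product `P = α · Φ⁻¹` (whose entries are
`Σ_k α_{jk} φ^{kl}`).  Then for all `j, l, q` and `x ∈ D`: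
`Σ_p φ^{pq} ∂_p (Σ_k α_{jk} φ^{kl}) − Σ_p φ^{pl} ∂_p (Σ_k α_{jk} φ^{kq})
  = Σ_{k,p} (∂α_{jk}/∂x^p − ∂α_{jp}/∂x^k) φ^{kl} φ^{pq}`.
(This identity, using the total symmetry of the third derivatives of `φ`, shows that the
fiberwise Fourier–Legendre mirror transformation of forms commutes with `∂̄`.) -/
theorem mirror_transform_commutes_with_dbar_identity {n : ℕ}
    (D : Set (Fin n → ℝ)) (hD : IsOpen D)
    (φ : (Fin n → ℝ) → ℝ)
    (Gφ : (Fin n → ℝ) → (Fin n → ℝ))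
    (Hφ : (Fin n → ℝ) → Matrix (Fin n) (Fin n) ℝ)
    (hgradφ : ∀ x ∈ D, HasFDerivAt φ (gradCLM (Gφ x)) x)
    (hhessφ : ∀ x ∈ D, HasFDerivAt Gφ (matCLM (Hφ x)) x)
    (hinv : ∀ x ∈ D, IsUnit (Hφ x).det)
    (DH : (Fin n → ℝ) → (Fin n → ℝ) →L[ℝ] Matrix (Fin n) (Fin n) ℝ)
    (hDH : ∀ x ∈ D, HasFDerivAt Hφ (DH x) x)
    (α : (Fin n → ℝ) → Matrix (Fin n) (Fin n) ℂ)
    (Dα : (Fin n → ℝ) → (Fin n → ℝ) →L[ℝ] Matrix (Fin n) (Fin n) ℂ)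
    (hα : ∀ x ∈ D, HasFDerivAt α (Dα x) x)
    (DP : (Fin n → ℝ) → (Fin n → ℝ) →L[ℝ] Matrix (Fin n) (Fin n) ℂ)
    (hDP : ∀ x ∈ D,
      HasFDerivAt (fun y => α y * ((Hφ y)⁻¹).map (fun r => (r : ℂ))) (DP x) x) :
    ∀ x ∈ D, ∀ j l q : Fin n,
      (∑ p, ((((Hφ x)⁻¹ p q : ℝ)) : ℂ) * DP x (Pi.single p 1) j l)
        - (∑ p, ((((Hφ x)⁻¹ p l : ℝ)) : ℂ) * DP x (Pi.single p 1) j q)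
      = ∑ k, ∑ p,
          (Dα x (Pi.single p 1) j k - Dα x (Pi.single k 1) j p)
            * ((((Hφ x)⁻¹ k l : ℝ)) : ℂ) * ((((Hφ x)⁻¹ p q : ℝ)) : ℂ) :=
  mirror_transform_commutes_with_dbar_identity_general D hD Gφ Hφ hhessφ hinv DH hDH α Dα hα DP hDP
end

section
/- Let D ⊆ ℝⁿ be open and connected, f : D → ℝⁿ a C² map, and g : D → Matₙ(ℝ) a C¹ matrix-valued map. Define the fiberwise-linear map F : {x + iy ∈ ℂⁿ : x ∈ D, y ∈ ℝⁿ} → ℂⁿ by F(x + iy) = f(x) + i·g(x)y. Then F is holomorphic (complex differentiable at every point) if and only if g(x) = Df(x) for all x ∈ D and Df is constant on D, i.e., if and only if f is the restriction of an affine map and F = f_B for this affine map f. -/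
/-!
The real derivative of `F(x + iy) = f(x) + i g(x) y` at `x + iy` is
`u + iv ↦ Df(x) u + i ((Dg(x) u) y + g(x) v)`. If `F` is holomorphic this map is complex
linear; comparing its values at `i e` and `e` for a real vector `e` gives `g(x) e = Df(x) e`
(imaginary parts) and `(Dg(x) e) y = 0` for every `y` (real parts). Hence `g = Df` and
`Dg = 0` on `D`, so `g` is constant on the connected open set `D`. Conversely, if
`g = Df = A` on `D`, the derivative is `w ↦ A w`, which is complex linear.
-/

open Matrix Set

attribute [local instance] Matrix.normedAddCommGroup Matrix.normedSpace

open Complex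

section Coordinates

variable (ι : Type*)

noncomputable def piReCLM : (ι → ℂ) →L[ℝ] (ι → ℝ) :=
  ContinuousLinearMap.pi fun k => reCLM ∘L ContinuousLinearMap.proj k

noncomputable def piImCLM : (ι → ℂ) →L[ℝ] (ι → ℝ) :=
  ContinuousLinearMap.pi fun k => imCLM ∘L ContinuousLinearMap.proj k

noncomputable def piOfRealCLM : (ι → ℝ) →L[ℝ] (ι → ℂ) :=
  ContinuousLinearMap.pi fun k => ofRealCLM ∘L ContinuousLinearMap.proj k

variable {ι}

@[simp] lemma piReCLM_apply (z : ι → ℂ) (k : ι) : piReCLM ι z k = (z k).re := rfl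

@[simp] lemma piImCLM_apply (z : ι → ℂ) (k : ι) : piImCLM ι z k = (z k).im := rfl

@[simp] lemma piOfRealCLM_apply (x : ι → ℝ) (k : ι) : piOfRealCLM ι x k = x k := rfl

@[simp] lemma piReCLM_piOfRealCLM (x : ι → ℝ) : piReCLM ι (piOfRealCLM ι x) = x := rfl

@[simp] lemma piImCLM_piOfRealCLM (x : ι → ℝ) : piImCLM ι (piOfRealCLM ι x) = 0 := rfl

@[simp] lemma piReCLM_I_smul_piOfRealCLM (x : ι → ℝ) :
    piReCLM ι (I • piOfRealCLM ι x) = 0 := by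
  ext; simp

@[simp] lemma piImCLM_I_smul_piOfRealCLM (x : ι → ℝ) :
    piImCLM ι (I • piOfRealCLM ι x) = x := by
  ext; simp

end Coordinates

theorem HasFDerivAt.map_I_smul_of_differentiableAt {E F : Type*}
    [NormedAddCommGroup E] [NormedSpace ℂ E] [NormedAddCommGroup F] [NormedSpace ℂ F]
    {φ : E → F} {L : E →L[ℝ] F} {z : E} (hL : HasFDerivAt φ L z)
    (hφ : DifferentiableAt ℂ φ z) (v : E) : L (I • v) = I • L v := by
  rw [hL.unique (hφ.hasFDerivAt.restrictScalars ℝ)]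
  exact (fderiv ℂ φ z).map_smul I v

theorem Matrix.map_ofReal_mulVec {ι : Type*} [Fintype ι] (A : Matrix ι ι ℝ) (w : ι → ℂ) :
    A.map ((↑) : ℝ → ℂ) *ᵥ w
      = piOfRealCLM ι (A *ᵥ piReCLM ι w) + I • piOfRealCLM ι (A *ᵥ piImCLM ι w) := by
  ext j
  simp [Matrix.mulVec, dotProduct, Complex.ext_iff, Complex.mul_re, Complex.mul_im]

variable {n : ℕ}

@[simp] lemma matCLM_apply (A : Matrix (Fin n) (Fin n) ℝ) (u : Fin n → ℝ) :
    matCLM A u = A *ᵥ u := rfl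

noncomputable def matCLMCLM (n : ℕ) :
    Matrix (Fin n) (Fin n) ℝ →L[ℝ] (Fin n → ℝ) →L[ℝ] (Fin n → ℝ) :=
  LinearMap.toContinuousLinearMap
    (LinearMap.toContinuousLinearMap.toLinearMap ∘ₗ Matrix.toLin'.toLinearMap)

@[simp] lemma matCLMCLM_apply (A : Matrix (Fin n) (Fin n) ℝ) : matCLMCLM n A = matCLM A := rfl

noncomputable def fiberwiseLinear (f : (Fin n → ℝ) → (Fin n → ℝ))
    (g : (Fin n → ℝ) → Matrix (Fin n) (Fin n) ℝ) (z : Fin n → ℂ) : Fin n → ℂ :=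
  piOfRealCLM _ (f (piReCLM _ z)) + I • piOfRealCLM _ (g (piReCLM _ z) *ᵥ piImCLM _ z)

theorem hasFDerivAt_fiberwiseLinear {f : (Fin n → ℝ) → (Fin n → ℝ)}
    {g : (Fin n → ℝ) → Matrix (Fin n) (Fin n) ℝ} {Df : (Fin n → ℝ) →L[ℝ] (Fin n → ℝ)}
    {Dg : (Fin n → ℝ) →L[ℝ] Matrix (Fin n) (Fin n) ℝ} {z : Fin n → ℂ}
    (hf : HasFDerivAt f Df (piReCLM _ z)) (hg : HasFDerivAt g Dg (piReCLM _ z)) :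
    ∃ L : (Fin n → ℂ) →L[ℝ] (Fin n → ℂ), HasFDerivAt (fiberwiseLinear f g) L z ∧
      ∀ w, L w = piOfRealCLM _ (Df (piReCLM _ w)) + I • piOfRealCLM _
        (Dg (piReCLM _ w) *ᵥ piImCLM _ z + g (piReCLM _ z) *ᵥ piImCLM _ w) := by
  have hre := (piReCLM (Fin n)).hasFDerivAt (x := z)
  have hmat : HasFDerivAt (fun w => matCLMCLM n (g (piReCLM _ w)))
      (matCLMCLM n ∘L Dg ∘L piReCLM _) z :=
    (matCLMCLM n).hasFDerivAt.comp z (hg.comp z hre)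
  have hmulVec := hmat.clm_apply (piImCLM (Fin n)).hasFDerivAt
  have hsum := ((piOfRealCLM _).hasFDerivAt.comp z (hf.comp z hre)).add
    (((piOfRealCLM _).hasFDerivAt.comp z hmulVec).const_smul I)
  refine ⟨_, hsum, fun w => ?_⟩
  simp only [matCLMCLM_apply, ContinuousLinearMap.comp_add, smul_add, _root_.add_apply,
    ContinuousLinearMap.comp_apply, _root_.smul_apply, matCLM_apply,
    ContinuousLinearMap.flip_apply, map_add, add_right_inj]
  abel

theorem fiberwiseLinear_cauchyRiemann {f : (Fin n → ℝ) → (Fin n → ℝ)}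
    {g : (Fin n → ℝ) → Matrix (Fin n) (Fin n) ℝ} {A : Matrix (Fin n) (Fin n) ℝ}
    {Dg : (Fin n → ℝ) →L[ℝ] Matrix (Fin n) (Fin n) ℝ} {z : Fin n → ℂ}
    (hf : HasFDerivAt f (matCLM A) (piReCLM _ z)) (hg : HasFDerivAt g Dg (piReCLM _ z))
    (hF : DifferentiableAt ℂ (fiberwiseLinear f g) z) (e : Fin n → ℝ) :
    g (piReCLM _ z) *ᵥ e = A *ᵥ e ∧ Dg e *ᵥ piImCLM _ z = 0 := by
  obtain ⟨L, hL, hLw⟩ := hasFDerivAt_fiberwiseLinear hf hg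
  have hCR := hL.map_I_smul_of_differentiableAt hF (piOfRealCLM _ e)
  rw [hLw, hLw] at hCR
  constructor
  · ext j
    simpa using congrArg (fun v => (v j).im) hCR
  · ext j
    simpa using congrArg (fun v => (v j).re) hCR

theorem differentiableAt_fiberwiseLinear_of_eventuallyEq {f : (Fin n → ℝ) → (Fin n → ℝ)}
    {g : (Fin n → ℝ) → Matrix (Fin n) (Fin n) ℝ} {A : Matrix (Fin n) (Fin n) ℝ}
    {z : Fin n → ℂ} (hf : HasFDerivAt f (matCLM A) (piReCLM _ z))
    (hg : g =ᶠ[nhds (piReCLM _ z)] fun _ => A) :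
    DifferentiableAt ℂ (fiberwiseLinear f g) z := by
  have hg' : HasFDerivAt g 0 (piReCLM _ z) :=
    (hasFDerivAt_const (𝕜 := ℝ) A _).congr_of_eventuallyEq hg
  obtain ⟨L, hL, hLw⟩ := hasFDerivAt_fiberwiseLinear hf hg'
  refine (hasFDerivAt_of_restrictScalars ℝ hL
    (f' := (Matrix.mulVecLin (A.map ((↑) : ℝ → ℂ))).toContinuousLinearMap) ?_).differentiableAt
  ext1 w
  simp [hLw, hg.eq_of_nhds, Matrix.map_ofReal_mulVec]

theorem fiberwise_linear_holomorphic_iff_affine_lift_general {n : ℕ}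
    (D : Set (Fin n → ℝ)) (hD : IsOpen D) (hconn : IsConnected D)
    (f : (Fin n → ℝ) → (Fin n → ℝ))
    (Df : (Fin n → ℝ) → Matrix (Fin n) (Fin n) ℝ)
    (hf : ∀ x ∈ D, HasFDerivAt f (matCLM (Df x)) x)
    (g : (Fin n → ℝ) → Matrix (Fin n) (Fin n) ℝ)
    (Dg : (Fin n → ℝ) → (Fin n → ℝ) →L[ℝ] Matrix (Fin n) (Fin n) ℝ)
    (hg : ∀ x ∈ D, HasFDerivAt g (Dg x) x)
    (F : (Fin n → ℂ) → (Fin n → ℂ))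
    (hF : ∀ z : Fin n → ℂ, F z = fun j =>
      ((f (fun k => (z k).re) j : ℝ) : ℂ)
        + Complex.I * (((g (fun k => (z k).re)).mulVec (fun k => (z k).im) j : ℝ) : ℂ)) :
    (∀ z : Fin n → ℂ, (fun k => (z k).re) ∈ D → DifferentiableAt ℂ F z)
      ↔ ((∀ x ∈ D, g x = Df x) ∧
          ∃ A : Matrix (Fin n) (Fin n) ℝ, ∀ x ∈ D, Df x = A) := by
  obtain rfl : F = fiberwiseLinear f g := funext hF
  constructor
  · intro hHol
    have hCR (x) (hx : x ∈ D) (y e : Fin n → ℝ) :=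
      fiberwiseLinear_cauchyRiemann (z := fun k => ⟨x k, y k⟩) (hf x hx) (hg x hx) (hHol _ hx) e
    have hgDf (x) (hx : x ∈ D) : g x = Df x :=
      Matrix.ext_iff_mulVec.2 fun e => (hCR x hx 0 e).1
    have hDg (x) (hx : x ∈ D) : Dg x = 0 := by
      ext1 e
      exact Matrix.ext_iff_mulVec.2 fun y => (hCR x hx y e).2.trans (zero_mulVec y).symm
    obtain ⟨A, hA⟩ := hD.exists_is_const_of_fderiv_eq_zero hconn.isPreconnected
      (fun x hx => (hg x hx).differentiableAt.differentiableWithinAt)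
      (fun x hx => (hg x hx).fderiv.trans (hDg x hx))
    exact ⟨hgDf, A, fun x hx => (hgDf x hx).symm.trans (hA x hx)⟩
  · rintro ⟨hgDf, A, hA⟩ z hz
    refine differentiableAt_fiberwiseLinear_of_eventuallyEq (hA _ hz ▸ hf _ hz) ?_
    filter_upwards [hD.mem_nhds hz] with x hx using (hgDf x hx).trans (hA x hx)

/-- Let `D ⊆ ℝⁿ` be open and connected, `f : D → ℝⁿ` a C² map (with
Jacobian `Df`), and `g : D → Matₙ(ℝ)` a C¹ matrix-valued map (with derivative `Dg`).
Define the fiberwise-linear map `F (x + iy) = f x + i · (g x) y` on the tube over `D`.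
Then `F` is holomorphic (complex differentiable at every point of the tube) iff
`g x = Df x` for all `x ∈ D` and `Df` is constant on `D`, i.e. iff `f` is the restriction
of an affine map and `F = f_B` for this affine map. -/
theorem fiberwise_linear_holomorphic_iff_affine_lift {n : ℕ}
    (D : Set (Fin n → ℝ)) (hD : IsOpen D) (hconn : IsConnected D)
    (f : (Fin n → ℝ) → (Fin n → ℝ))
    (Df : (Fin n → ℝ) → Matrix (Fin n) (Fin n) ℝ)
    (hfC2 : ContDiffOn ℝ 2 f D)
    (hf : ∀ x ∈ D, HasFDerivAt f (matCLM (Df x)) x)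
    (g : (Fin n → ℝ) → Matrix (Fin n) (Fin n) ℝ)
    (Dg : (Fin n → ℝ) → (Fin n → ℝ) →L[ℝ] Matrix (Fin n) (Fin n) ℝ)
    (hgC1 : ContDiffOn ℝ 1 g D)
    (hg : ∀ x ∈ D, HasFDerivAt g (Dg x) x)
    (F : (Fin n → ℂ) → (Fin n → ℂ))
    (hF : ∀ z : Fin n → ℂ, F z = fun j =>
      ((f (fun k => (z k).re) j : ℝ) : ℂ)
        + Complex.I * (((g (fun k => (z k).re)).mulVec (fun k => (z k).im) j : ℝ) : ℂ)) :
    (∀ z : Fin n → ℂ, (fun k => (z k).re) ∈ D → DifferentiableAt ℂ F z)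
      ↔ ((∀ x ∈ D, g x = Df x) ∧
          ∃ A : Matrix (Fin n) (Fin n) ℝ, ∀ x ∈ D, Df x = A) :=
  fiberwise_linear_holomorphic_iff_affine_lift_general D hD hconn f Df hf g Dg hg F hF
end

section
/- Let n ≥ 1, let Λ(ℂ^{2n}) be the exterior algebra of ℂ^{2n} with standard basis e_1,…,e_n,f_1,…,f_n, let Φ = (Φ_{jk}) be a symmetric n×n complex matrix, and set ω_Φ = Σ_{j,k} Φ_{jk} e_j ∧ f_k ∈ Λ²(ℂ^{2n}). Let L_A : Λ(ℂ^{2n}) → Λ(ℂ^{2n}) be exterior multiplication by ω_Φ, and let L_B = Σ_j ε(f_j)∘ι(e_j*) and Λ_B = Σ_j ε(e_j)∘ι(f_j*) as operators on Λ(ℂ^{2n}) (ε denoting left exterior multiplication and ι contraction with the dual basis covectors). Then L_A∘L_B = L_B∘L_A and L_A∘Λ_B = Λ_B∘L_A. Consequently the hard Lefschetz sl₂ action generated by L_A and the variation-of-Hodge-structures sl₂ action generated by L_B commute, giving an sl₂ × sl₂ action. -/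
/-! Model of the exterior algebra `Λ(ℂ^{2n})`: we take `ℂ^{2n} = (Fin n ⊕ Fin n) → ℂ`,
with standard basis vectors `e j = Pi.single (inl j) 1` and `f j = Pi.single (inr j) 1`.
`eps v` is left exterior multiplication by `v` and `contr d` is interior multiplication
(contraction) with the covector `d` (via `CliffordAlgebra.contractLeft`, the exterior
algebra being the Clifford algebra of the zero quadratic form). -/

/-- `ℂ^{2n}` with its standard basis split into two groups of `n` vectors. -/
abbrev Vn (n : ℕ) := (Fin n ⊕ Fin n) → ℂ

/-- Left exterior multiplication `ε(v)` on `Λ(ℂ^{2n})`. -/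
noncomputable def eps {n : ℕ} (v : Vn n) :
    ExteriorAlgebra ℂ (Vn n) →ₗ[ℂ] ExteriorAlgebra ℂ (Vn n) :=
  LinearMap.mulLeft ℂ (ExteriorAlgebra.ι ℂ v)

/-- Interior multiplication (contraction) `ι(d)` with a covector `d` on `Λ(ℂ^{2n})`. -/
noncomputable def contr {n : ℕ} (d : Module.Dual ℂ (Vn n)) :
    ExteriorAlgebra ℂ (Vn n) →ₗ[ℂ] ExteriorAlgebra ℂ (Vn n) :=
  CliffordAlgebra.contractLeft d

/-- The basis vector `e_j`. -/
noncomputable def eVec (n : ℕ) (j : Fin n) : Vn n := Pi.single (Sum.inl j) 1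
/-- The basis vector `f_j`. -/
noncomputable def fVec (n : ℕ) (j : Fin n) : Vn n := Pi.single (Sum.inr j) 1
/-- The dual basis covector `e_j*`. -/
noncomputable def eCoord (n : ℕ) (j : Fin n) : Module.Dual ℂ (Vn n) :=
  LinearMap.proj (Sum.inl j)
/-- The dual basis covector `f_j*`. -/
noncomputable def fCoord (n : ℕ) (j : Fin n) : Module.Dual ℂ (Vn n) :=
  LinearMap.proj (Sum.inr j)

/-- The variation-of-Hodge-structures operator `L_B = Σ_j ε(f_j) ∘ ι(e_j*)`. -/
noncomputable def LB (n : ℕ) : ExteriorAlgebra ℂ (Vn n) →ₗ[ℂ] ExteriorAlgebra ℂ (Vn n) :=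
  ∑ j, (eps (fVec n j)) ∘ₗ (contr (eCoord n j))

/-- Its adjoint `Λ_B = Σ_j ε(e_j) ∘ ι(f_j*)`. -/
noncomputable def LamB (n : ℕ) : ExteriorAlgebra ℂ (Vn n) →ₗ[ℂ] ExteriorAlgebra ℂ (Vn n) :=
  ∑ j, (eps (eVec n j)) ∘ₗ (contr (fCoord n j))

/-- The Kähler-type two-form `ω_Φ = Σ_{j,k} Φ_{jk} e_j ∧ f_k` attached to a symmetric
matrix `Φ`. -/
noncomputable def omegaPhi {n : ℕ} (Φ : Matrix (Fin n) (Fin n) ℂ) :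
    ExteriorAlgebra ℂ (Vn n) :=
  ∑ j, ∑ k, Φ j k • (ExteriorAlgebra.ι ℂ (eVec n j) * ExteriorAlgebra.ι ℂ (fVec n k))

/-- The hard Lefschetz operator `L_A`: exterior multiplication by `ω_Φ`. -/
noncomputable def LA {n : ℕ} (Φ : Matrix (Fin n) (Fin n) ℂ) :
    ExteriorAlgebra ℂ (Vn n) →ₗ[ℂ] ExteriorAlgebra ℂ (Vn n) :=
  LinearMap.mulLeft ℂ (omegaPhi Φ)

/-! A bivector `ω` commutes with every `ε(v)`, and every contraction `ι(d)` acts on products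
`ω ∧ x` as a derivation: `ι(d)(ω ∧ x) = ι(d)ω ∧ x + ω ∧ ι(d)x`. Hence the commutator of
`Σ_j ε(u_j) ι(d_j)` with `L_A` is wedging with `Σ_j u_j ∧ ι(d_j)ω_Φ`. For `L_B` this is
`Σ_{j,k} Φ_{jk} f_j ∧ f_k` and for `Λ_B` it is `-Σ_{j,k} Φ_{kj} e_j ∧ e_k`; both vanish because
`Φ` is symmetric while the wedge product is alternating. -/

namespace ExteriorAlgebra

variable {R M : Type*} [CommRing R] [AddCommGroup M] [Module R M]

theorem ι_mul_ι_anticomm (a b : M) : ι R a * ι R b = -(ι R b * ι R a) :=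
  eq_neg_of_add_eq_zero_left (ι_add_mul_swap a b)

theorem commute_ι_ι_mul_ι (u a b : M) : Commute (ι R u) (ι R a * ι R b) := by
  simp only [Commute, SemiconjBy, ← mul_assoc, ι_mul_ι_anticomm u a]
  simp only [neg_mul, mul_assoc, ι_mul_ι_anticomm u b, mul_neg, neg_neg]

theorem contractLeft_ι_mul_ι (d : Module.Dual R M) (a b : M) :
    CliffordAlgebra.contractLeft d (ι R a * ι R b) = d a • ι R b - d b • ι R a := by
  rw [CliffordAlgebra.contractLeft_ι_mul, CliffordAlgebra.contractLeft_ι, ← Algebra.commutes,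
    ← Algebra.smul_def]

theorem contractLeft_ι_mul_ι_mul (d : Module.Dual R M) (a b : M) (x : ExteriorAlgebra R M) :
    CliffordAlgebra.contractLeft d (ι R a * ι R b * x) =
      CliffordAlgebra.contractLeft d (ι R a * ι R b) * x +
        ι R a * ι R b * CliffordAlgebra.contractLeft d x := by
  rw [contractLeft_ι_mul_ι, mul_assoc, CliffordAlgebra.contractLeft_ι_mul,
    CliffordAlgebra.contractLeft_ι_mul, mul_sub, mul_smul_comm, sub_mul, smul_mul_assoc,
    smul_mul_assoc, mul_assoc]
  abel

theorem ι_mul_contractLeft_mul_of_mem_exteriorPower_two {ω : ExteriorAlgebra R M}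
    (hω : ω ∈ ⋀[R]^2 M) (u : M) (d : Module.Dual R M) (x : ExteriorAlgebra R M) :
    ι R u * CliffordAlgebra.contractLeft d (ω * x) =
      ω * (ι R u * CliffordAlgebra.contractLeft d x) +
        ι R u * CliffordAlgebra.contractLeft d ω * x := by
  rw [exteriorPower, pow_two] at hω
  induction hω using Submodule.mul_induction_on' with
  | mem_mul_mem _ ha _ hb =>
    obtain ⟨a, rfl⟩ := ha
    obtain ⟨b, rfl⟩ := hb
    rw [contractLeft_ι_mul_ι_mul, mul_add, ← mul_assoc, add_comm, ← mul_assoc,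
      (commute_ι_ι_mul_ι u a b).eq, mul_assoc]
  | add ω _ ω' _ h h' =>
    simp only [add_mul, map_add, mul_add, h, h']
    abel

theorem mulLeft_comp_sum_mulLeft_ι_comp_contractLeft_comm {κ : Type*} [Fintype κ]
    {ω : ExteriorAlgebra R M} (hω : ω ∈ ⋀[R]^2 M) (u : κ → M) (d : κ → Module.Dual R M)
    (h : ∑ j, ι R (u j) * CliffordAlgebra.contractLeft (d j) ω = 0) :
    LinearMap.mulLeft R ω ∘ₗ
        ∑ j, LinearMap.mulLeft R (ι R (u j)) ∘ₗ CliffordAlgebra.contractLeft (d j) =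
      (∑ j, LinearMap.mulLeft R (ι R (u j)) ∘ₗ CliffordAlgebra.contractLeft (d j)) ∘ₗ
        LinearMap.mulLeft R ω := by
  refine LinearMap.ext fun x => ?_
  simp only [LinearMap.comp_apply, LinearMap.sum_apply, LinearMap.mulLeft_apply,
    ι_mul_contractLeft_mul_of_mem_exteriorPower_two hω, Finset.sum_add_distrib,
    ← Finset.sum_mul, h, zero_mul, add_zero, Finset.mul_sum]

theorem sum_sum_smul_ι_mul_ι_eq_zero {κ : Type*} [Fintype κ] (c : κ → κ → R)
    (hc : ∀ j k, c j k = c k j) (g : κ → M) :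
    ∑ j, ∑ k, c j k • (ι R (g j) * ι R (g k)) = 0 := by
  rw [← Finset.sum_product', Finset.univ_product_univ]
  refine Finset.sum_ninvolution Prod.swap (fun p => ?_) (fun p hp => ?_)
    (fun _ => Finset.mem_univ _) Prod.swap_swap
  · rw [Prod.fst_swap, Prod.snd_swap, hc p.2, ← smul_add, ι_add_mul_swap, smul_zero]
  · contrapose! hp
    obtain ⟨j, k⟩ := p
    rw [Prod.swap_prod_mk, Prod.mk.injEq] at hp
    rw [hp.2, ι_sq_zero, smul_zero]

end ExteriorAlgebra

open ExteriorAlgebra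

theorem omegaPhi_mem_exteriorPower_two {n : ℕ} (Φ : Matrix (Fin n) (Fin n) ℂ) :
    omegaPhi Φ ∈ ⋀[ℂ]^2 (Vn n) := by
  rw [exteriorPower, pow_two]
  exact Submodule.sum_mem _ fun j _ => Submodule.sum_mem _ fun k _ =>
    Submodule.smul_mem _ _ (Submodule.mul_mem_mul (LinearMap.mem_range_self _ _)
      (LinearMap.mem_range_self _ _))

theorem contractLeft_eCoord_omegaPhi {n : ℕ} (Φ : Matrix (Fin n) (Fin n) ℂ) (j : Fin n) :
    CliffordAlgebra.contractLeft (eCoord n j) (omegaPhi Φ) = ∑ k, Φ j k • ι ℂ (fVec n k) := by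
  simp [omegaPhi, contractLeft_ι_mul_ι, eCoord, eVec, fVec, Pi.single_apply]

theorem contractLeft_fCoord_omegaPhi {n : ℕ} (Φ : Matrix (Fin n) (Fin n) ℂ) (k : Fin n) :
    CliffordAlgebra.contractLeft (fCoord n k) (omegaPhi Φ) = -∑ j, Φ j k • ι ℂ (eVec n j) := by
  simp [omegaPhi, contractLeft_ι_mul_ι, fCoord, eVec, fVec, Pi.single_apply]

theorem hard_lefschetz_commutes_with_vhs_general (n : ℕ)
    (Φ : Matrix (Fin n) (Fin n) ℂ) (hΦ : Φ.IsSymm) :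
    LA Φ ∘ₗ LB n = LB n ∘ₗ LA Φ ∧ LA Φ ∘ₗ LamB n = LamB n ∘ₗ LA Φ := by
  have hω := omegaPhi_mem_exteriorPower_two Φ
  constructor
  · refine mulLeft_comp_sum_mulLeft_ι_comp_contractLeft_comm hω _ _ ?_
    simp_rw [contractLeft_eCoord_omegaPhi, Finset.mul_sum, mul_smul_comm]
    exact sum_sum_smul_ι_mul_ι_eq_zero Φ (fun j k => hΦ.apply k j) _
  · refine mulLeft_comp_sum_mulLeft_ι_comp_contractLeft_comm hω _ _ ?_
    simp_rw [contractLeft_fCoord_omegaPhi, mul_neg, Finset.mul_sum, mul_smul_comm,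
      Finset.sum_neg_distrib, neg_eq_zero]
    exact sum_sum_smul_ι_mul_ι_eq_zero Φ.transpose (fun j k => hΦ.apply j k) _

/-- For `n ≥ 1` and a *symmetric* `n × n` complex matrix `Φ`, the hard
Lefschetz operator `L_A` (wedging with `ω_Φ = Σ Φ_{jk} e_j ∧ f_k`) commutes with both the
variation-of-Hodge-structures operator `L_B = Σ ε(f_j) ι(e_j*)` and its adjoint
`Λ_B = Σ ε(e_j) ι(f_j*)`: `L_A ∘ L_B = L_B ∘ L_A` and `L_A ∘ Λ_B = Λ_B ∘ L_A`.
Consequently the hard Lefschetz `sl₂` action and the VHS `sl₂` action commute, giving an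
`sl₂ × sl₂` action. -/
theorem hard_lefschetz_commutes_with_vhs (n : ℕ) (hn : 1 ≤ n)
    (Φ : Matrix (Fin n) (Fin n) ℂ) (hΦ : Φ.IsSymm) :
    LA Φ ∘ₗ LB n = LB n ∘ₗ LA Φ ∧ LA Φ ∘ₗ LamB n = LamB n ∘ₗ LA Φ :=
  hard_lefschetz_commutes_with_vhs_general n Φ hΦ
end
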